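/- arXiv:2508.16960 — 2 statements merged into one kernel-verified Lean document; each statement's English description precedes it below -/
import Mathlib

section
/- There exists a constant C > 0 such that for every T > 0 and all functions f, g on [0,T]×ℝ² which are continuous in t with values in the Schwartz space: (∫₀^T [∫_ℝ (∫_ℝ |f(t,x₁,x₂)g(t,x₁,x₂)|^{18/13} dx₁)^{26/18} dx₂] dt)^{1/2} ≤ C [(∫₀^T ‖f(t)‖⁴_{H¹(ℝ²)} dt)^{1/2} + (∫₀^T ‖g(t)‖⁴_{H¹(ℝ²)} dt)^{1/2}], i.e. ‖fg‖_{L²_T L²_{x₂} L^{18/13}_{x₁}} ≤ C(‖f‖²_{L⁴_T H¹} + ‖g‖²_{L⁴_T H¹}). -/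
/-!
For `ψ : ℝ → E` vanishing at `+∞`, `‖ψ s‖² = -∫ₛ^∞ (‖ψ‖²)' ≤ ∫ (‖ψ‖² + ‖ψ'‖²)`.
Fix `t` and write `φ = f t`, `γ = g t`. On each line `x₂ = const`, Hölder with exponents
`13/9, 13/4` and this bound for `γ` give
`(∫ |φγ|^{18/13} dx₁)^{13/9} ≤ ‖φ(·, x₂)‖²_{L²} (‖γ(·, x₂)‖²_{L²} + ‖∂₁γ(·, x₂)‖²_{L²})`.
The same bound in the `x₂`-direction, integrated in `x₁`, gives
`sup_{x₂} ‖φ(·, x₂)‖²_{L²} ≤ ‖φ‖²_{H¹}`, so integrating in `x₂` yields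
`‖φγ‖²_{L²_{x₂} L^{18/13}_{x₁}} ≤ ‖φ‖²_{H¹} ‖γ‖²_{H¹} ≤ ‖φ‖⁴_{H¹} + ‖γ‖⁴_{H¹}`.
Integrating in `t` and using `√(a + b) ≤ √a + √b` gives the estimate with `C = 1`.
-/

open MeasureTheory
open scoped ENNReal NNReal

noncomputable section

/-- Fourier transform on ℝ² (realized as ℝ × ℝ). -/
def FT (f : ℝ × ℝ → ℂ) : ℝ × ℝ → ℂ := fun ξ =>
  ∫ x : ℝ × ℝ,
    Complex.exp (((-(2 * Real.pi * (x.1 * ξ.1 + x.2 * ξ.2)) : ℝ) : ℂ) * Complex.I) * f x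

/-- Inverse Fourier transform on ℝ². -/
def FTinv (f : ℝ × ℝ → ℂ) : ℝ × ℝ → ℂ := fun x =>
  ∫ ξ : ℝ × ℝ,
    Complex.exp ((((2 * Real.pi * (x.1 * ξ.1 + x.2 * ξ.2)) : ℝ) : ℂ) * Complex.I) * f ξ

/-- The linear Zakharov–Kuznetsov group `U(t)φ = F⁻¹(e^{i t ξ₁(ξ₁²+ξ₂²)} Fφ)`. -/
def U (t : ℝ) (φ : ℝ × ℝ → ℂ) : ℝ × ℝ → ℂ :=
  FTinv (fun ξ => Complex.exp (Complex.I * ((t * ξ.1 * (ξ.1 ^ 2 + ξ.2 ^ 2) : ℝ) : ℂ)) * FT φ ξ)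

/-- Fractional derivative in the first variable: `D^r_{x₁} f = F⁻¹(|ξ₁|^r F f)`. -/
def Dx1 (r : ℝ) (f : ℝ × ℝ → ℂ) : ℝ × ℝ → ℂ :=
  FTinv (fun ξ => ((|ξ.1| ^ r : ℝ) : ℂ) * FT f ξ)

/-- Fractional derivative in the second variable: `D^r_{x₂} f = F⁻¹(|ξ₂|^r F f)`. -/
def Dx2 (r : ℝ) (f : ℝ × ℝ → ℂ) : ℝ × ℝ → ℂ :=
  FTinv (fun ξ => ((|ξ.2| ^ r : ℝ) : ℂ) * FT f ξ)

/-- Partial derivative ∂_{x₁}. -/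
def pd1 (f : ℝ × ℝ → ℂ) : ℝ × ℝ → ℂ := fun x => fderiv ℝ f x (1, 0)

/-- Partial derivative ∂_{x₂}. -/
def pd2 (f : ℝ × ℝ → ℂ) : ℝ × ℝ → ℂ := fun x => fderiv ℝ f x (0, 1)

/-- Duhamel integral `∫₀^t U(t-τ) g(τ) dτ`. -/
def Duh (g : ℝ → ℝ × ℝ → ℂ) (t : ℝ) : ℝ × ℝ → ℂ := fun x =>
  ∫ τ in (0:ℝ)..t, U (t - τ) (g τ) x

/-- Sobolev norm `‖f‖_{H^s(ℝ²)}`. -/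
def HsNorm (s : ℝ) (f : ℝ × ℝ → ℂ) : ℝ≥0∞ :=
  (∫⁻ ξ : ℝ × ℝ,
      ENNReal.ofReal ((1 + ξ.1 ^ 2 + ξ.2 ^ 2) ^ s) * (‖FT f ξ‖₊ : ℝ≥0∞) ^ (2 : ℝ)) ^ ((1:ℝ)/2)

/-- The mixed norm `‖f‖_{L^{9/4}_T L^∞_x}`. -/
def L94LinfNorm (T : ℝ) (f : ℝ → ℝ × ℝ → ℂ) : ℝ≥0∞ :=
  (∫⁻ t in Set.Icc (0:ℝ) T, (eLpNorm (f t) ⊤ volume) ^ ((9:ℝ)/4)) ^ ((4:ℝ)/9)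

/-- The mixed norm `‖f‖_{L²_{x₁} L^∞_{x₂ T}}` (with genuine suprema). -/
def L2x1LinfNorm (T : ℝ) (f : ℝ → ℝ × ℝ → ℂ) : ℝ≥0∞ :=
  (∫⁻ x₁ : ℝ,
      (⨆ x₂ : ℝ, ⨆ t ∈ Set.Icc (0:ℝ) T, (‖f t (x₁, x₂)‖₊ : ℝ≥0∞)) ^ (2 : ℝ)) ^ ((1:ℝ)/2)

/-- The mixed norm `‖f‖_{L^∞_{x₁} L²_{x₂ T}}`. -/
def LinfX1L2Norm (T : ℝ) (f : ℝ → ℝ × ℝ → ℂ) : ℝ≥0∞ :=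
  ⨆ x₁ : ℝ,
    (∫⁻ x₂ : ℝ, ∫⁻ t in Set.Icc (0:ℝ) T, (‖f t (x₁, x₂)‖₊ : ℝ≥0∞) ^ (2 : ℝ)) ^ ((1:ℝ)/2)

/-- The mixed norm `‖g‖_{L¹_{x₁} L²_{x₂ T}}`. -/
def L1x1L2Norm (T : ℝ) (g : ℝ → ℝ × ℝ → ℂ) : ℝ≥0∞ :=
  ∫⁻ x₁ : ℝ,
    (∫⁻ x₂ : ℝ, ∫⁻ τ in Set.Icc (0:ℝ) T, (‖g τ (x₁, x₂)‖₊ : ℝ≥0∞) ^ (2 : ℝ)) ^ ((1:ℝ)/2)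

/-- The `H¹(ℝ²)` norm `(∫ (|∇h|² + |h|²))^{1/2}`. -/
def H1Norm (h : ℝ × ℝ → ℂ) : ℝ≥0∞ :=
  (∫⁻ x : ℝ × ℝ,
      ((‖pd1 h x‖₊ : ℝ≥0∞) ^ (2:ℝ) + (‖pd2 h x‖₊ : ℝ≥0∞) ^ (2:ℝ) +
        (‖h x‖₊ : ℝ≥0∞) ^ (2:ℝ))) ^ ((1:ℝ)/2)

open Filter Topology LineDeriv
open scoped SchwartzMap

theorem coe_nnnorm_rpow_two {E : Type*} [SeminormedAddCommGroup E] (x : E) :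
    (‖x‖₊ : ℝ≥0∞) ^ (2:ℝ) = ENNReal.ofReal (‖x‖ ^ 2) := by
  rw [ENNReal.rpow_two, ENNReal.ofReal_pow (norm_nonneg x), ofReal_norm, enorm_eq_nnnorm]

section Line

variable {E : Type*} [NormedAddCommGroup E] [InnerProductSpace ℝ E] {ψ ψ' : ℝ → E}

theorem sq_norm_le_integral_sq_norm_add_sq_norm_deriv
    (hψ : ∀ u, HasDerivAt ψ (ψ' u) u) (hψ' : Continuous ψ') (hlim : Tendsto ψ atTop (𝓝 0))
    (hint : Integrable fun u => ‖ψ u‖ ^ 2 + ‖ψ' u‖ ^ 2) (s : ℝ) :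
    ‖ψ s‖ ^ 2 ≤ ∫ u, ‖ψ u‖ ^ 2 + ‖ψ' u‖ ^ 2 := by
  have hcont : Continuous ψ := continuous_iff_continuousAt.2 fun u => (hψ u).continuousAt
  have hbound (u : ℝ) : |2 * inner ℝ (ψ u) (ψ' u)| ≤ ‖ψ u‖ ^ 2 + ‖ψ' u‖ ^ 2 := by
    rw [abs_mul, abs_two]
    nlinarith [abs_real_inner_le_norm (ψ u) (ψ' u), sq_nonneg (‖ψ u‖ - ‖ψ' u‖)]
  have hint' : Integrable fun u => 2 * inner ℝ (ψ u) (ψ' u) :=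
    hint.mono' (by fun_prop) (ae_of_all _ hbound)
  have hftc : ∫ u in Set.Ioi s, 2 * inner ℝ (ψ u) (ψ' u) = 0 - ‖ψ s‖ ^ 2 :=
    integral_Ioi_of_hasDerivAt_of_tendsto (f := fun u => ‖ψ u‖ ^ 2)
      (hcont.norm.pow 2).continuousWithinAt (fun u _ => (hψ u).norm_sq) hint'.integrableOn
      (by simpa using hlim.norm.pow 2)
  calc ‖ψ s‖ ^ 2 = ∫ u in Set.Ioi s, -(2 * inner ℝ (ψ u) (ψ' u)) := by
        rw [integral_neg, hftc, zero_sub, neg_neg]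
    _ ≤ ∫ u in Set.Ioi s, ‖ψ u‖ ^ 2 + ‖ψ' u‖ ^ 2 :=
        setIntegral_mono hint'.neg.integrableOn hint.integrableOn fun u =>
          (neg_le_abs _).trans (hbound u)
    _ ≤ ∫ u, ‖ψ u‖ ^ 2 + ‖ψ' u‖ ^ 2 :=
        setIntegral_le_integral hint (ae_of_all _ fun u => by positivity)

theorem coe_nnnorm_rpow_two_le_lintegral
    (hψ : ∀ u, HasDerivAt ψ (ψ' u) u) (hψ' : Continuous ψ') (hlim : Tendsto ψ atTop (𝓝 0))
    (s : ℝ) :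
    (‖ψ s‖₊ : ℝ≥0∞) ^ (2:ℝ) ≤ ∫⁻ u, (‖ψ u‖₊ : ℝ≥0∞) ^ (2:ℝ) + (‖ψ' u‖₊ : ℝ≥0∞) ^ (2:ℝ) := by
  have hcont : Continuous ψ := continuous_iff_continuousAt.2 fun u => (hψ u).continuousAt
  simp_rw [coe_nnnorm_rpow_two, ← ENNReal.ofReal_add (sq_nonneg _) (sq_nonneg _)]
  by_cases hfin : ∫⁻ u, ENNReal.ofReal (‖ψ u‖ ^ 2 + ‖ψ' u‖ ^ 2) = ∞
  · exact hfin ▸ le_top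
  have hint : Integrable fun u => ‖ψ u‖ ^ 2 + ‖ψ' u‖ ^ 2 :=
    ⟨by fun_prop, (hasFiniteIntegral_iff_ofReal (ae_of_all _ fun u => by positivity)).2
      (lt_top_iff_ne_top.2 hfin)⟩
  rw [← ofReal_integral_eq_lintegral_ofReal hint (ae_of_all _ fun u => by positivity)]
  exact ENNReal.ofReal_le_ofReal
    (sq_norm_le_integral_sq_norm_add_sq_norm_deriv hψ hψ' hlim hint s)

end Line

theorem tendsto_add_smul_atTop_cocompact {E : Type*} [NormedAddCommGroup E] [NormedSpace ℝ E]
    {v : E} (hv : v ≠ 0) (x : E) :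
    Tendsto (fun t : ℝ => x + t • v) atTop (cocompact E) :=
  ((Homeomorph.addLeft x).isClosedEmbedding.comp
    (isClosedEmbedding_smul_left hv)).tendsto_cocompact.mono_left atTop_le_cocompact

theorem lintegral_mul_rpow_le_of_sq_le {α : Type*} [MeasurableSpace α] {μ : Measure α}
    {a b : α → ℝ≥0∞} (ha : AEMeasurable a μ) (hb : AEMeasurable b μ) {M : ℝ≥0∞}
    (hsup : ∀ x, b x ^ (2:ℝ) ≤ M) (hL2 : ∫⁻ x, b x ^ (2:ℝ) ∂μ ≤ M) :
    (∫⁻ x, (a x * b x) ^ ((18:ℝ)/13) ∂μ) ^ ((13:ℝ)/9) ≤ (∫⁻ x, a x ^ (2:ℝ) ∂μ) * M := by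
  have hL92 : ∫⁻ x, b x ^ ((9:ℝ)/2) ∂μ ≤ M ^ ((9:ℝ)/4) :=
    calc ∫⁻ x, b x ^ ((9:ℝ)/2) ∂μ = ∫⁻ x, (b x ^ (2:ℝ)) ^ ((5:ℝ)/4) * b x ^ (2:ℝ) ∂μ := by
          refine lintegral_congr fun x => ?_
          rw [← ENNReal.rpow_mul, ← ENNReal.rpow_add_of_nonneg _ _ (by norm_num) (by norm_num)]
          norm_num
      _ ≤ ∫⁻ x, M ^ ((5:ℝ)/4) * b x ^ (2:ℝ) ∂μ := by gcongr with x; exact hsup x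
      _ = M ^ ((5:ℝ)/4) * ∫⁻ x, b x ^ (2:ℝ) ∂μ := lintegral_const_mul'' _ (hb.pow_const _)
      _ ≤ M ^ ((5:ℝ)/4) * M ^ (1:ℝ) := by rw [ENNReal.rpow_one]; gcongr
      _ = M ^ ((9:ℝ)/4) := by
          rw [← ENNReal.rpow_add_of_nonneg _ _ (by norm_num) (by norm_num)]; norm_num
  have hHolder : ∫⁻ x, (a x * b x) ^ ((18:ℝ)/13) ∂μ ≤
      (∫⁻ x, a x ^ (2:ℝ) ∂μ) ^ ((9:ℝ)/13) * (∫⁻ x, b x ^ ((9:ℝ)/2) ∂μ) ^ ((4:ℝ)/13) := by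
    have hpq : Real.HolderConjugate (13/9) (13/4) := ⟨by norm_num, by norm_num, by norm_num⟩
    have h := ENNReal.lintegral_mul_le_Lp_mul_Lq μ hpq (ha.pow_const ((18:ℝ)/13))
      (hb.pow_const ((18:ℝ)/13))
    simp only [Pi.mul_apply, ← ENNReal.rpow_mul] at h
    rw [show (18:ℝ)/13 * (13/9) = 2 by norm_num, show (18:ℝ)/13 * (13/4) = 9/2 by norm_num,
      show (1:ℝ)/(13/9) = 9/13 by norm_num, show (1:ℝ)/(13/4) = 4/13 by norm_num] at h
    simpa only [ENNReal.mul_rpow_of_nonneg _ _ (by norm_num : (0:ℝ) ≤ 18/13)] using h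
  calc (∫⁻ x, (a x * b x) ^ ((18:ℝ)/13) ∂μ) ^ ((13:ℝ)/9)
      ≤ ((∫⁻ x, a x ^ (2:ℝ) ∂μ) ^ ((9:ℝ)/13) * (M ^ ((9:ℝ)/4)) ^ ((4:ℝ)/13)) ^ ((13:ℝ)/9) := by
        gcongr
        exact hHolder.trans (by gcongr)
    _ = (∫⁻ x, a x ^ (2:ℝ) ∂μ) * M := by
        rw [← ENNReal.rpow_mul, show (9:ℝ)/4 * (4/13) = 9/13 by norm_num,
          ← ENNReal.mul_rpow_of_nonneg _ _ (by norm_num), ← ENNReal.rpow_mul]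
        norm_num

theorem rpow_two_mul_rpow_two_le_rpow_four_add (a b : ℝ≥0∞) :
    a ^ (2:ℝ) * b ^ (2:ℝ) ≤ a ^ (4:ℝ) + b ^ (4:ℝ) := by
  have hsq (c : ℝ≥0∞) : c ^ (2:ℝ) * c ^ (2:ℝ) = c ^ (4:ℝ) := by
    rw [← ENNReal.rpow_add_of_nonneg _ _ (by norm_num) (by norm_num)]; norm_num
  rcases le_total a b with hab | hba
  · calc a ^ (2:ℝ) * b ^ (2:ℝ) ≤ b ^ (2:ℝ) * b ^ (2:ℝ) := by gcongr
      _ ≤ a ^ (4:ℝ) + b ^ (4:ℝ) := hsq b ▸ le_add_self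
  · calc a ^ (2:ℝ) * b ^ (2:ℝ) ≤ a ^ (2:ℝ) * a ^ (2:ℝ) := by gcongr
      _ ≤ a ^ (4:ℝ) + b ^ (4:ℝ) := hsq a ▸ le_self_add

namespace SchwartzMap

theorem coe_nnnorm_rpow_two_le_lintegral_line {E F : Type*} [NormedAddCommGroup E]
    [NormedSpace ℝ E] [FiniteDimensional ℝ E] [NormedAddCommGroup F] [InnerProductSpace ℝ F]
    {v : E} (hv : v ≠ 0) (φ : 𝓢(E, F)) (x : E) :
    (‖φ x‖₊ : ℝ≥0∞) ^ (2:ℝ) ≤ ∫⁻ t : ℝ,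
      (‖φ (x + t • v)‖₊ : ℝ≥0∞) ^ (2:ℝ) + (‖∂_{v} φ (x + t • v)‖₊ : ℝ≥0∞) ^ (2:ℝ) := by
  have hderiv (t : ℝ) : HasDerivAt (fun t : ℝ => φ (x + t • v)) (∂_{v} φ (x + t • v)) t := by
    simpa [Function.comp_def, lineDerivOp_apply_eq_fderiv] using
      (φ.hasFDerivAt (x + t • v)).comp_hasDerivAt t
        (((hasDerivAt_id t).smul_const v).const_add x)
  simpa using coe_nnnorm_rpow_two_le_lintegral hderiv
    ((∂_{v} φ).continuous.comp (by fun_prop))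
    ((zero_at_infty φ).comp (tendsto_add_smul_atTop_cocompact hv x)) 0

theorem continuous_lintegral_coe_nnnorm_rpow_two {E F : Type*} [NormedAddCommGroup E]
    [NormedSpace ℝ E] [MeasurableSpace E] [OpensMeasurableSpace E] [NormedAddCommGroup F]
    [NormedSpace ℝ F] [SecondCountableTopologyEither E F] {μ : Measure E} [μ.HasTemperateGrowth] :
    Continuous fun φ : 𝓢(E, F) => ∫⁻ x, (‖φ x‖₊ : ℝ≥0∞) ^ (2:ℝ) ∂μ := by
  have h (φ : 𝓢(E, F)) : ∫⁻ x, (‖φ x‖₊ : ℝ≥0∞) ^ (2:ℝ) ∂μ = ‖φ.toLp 2 μ‖ₑ ^ (2:ℝ) := by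
    rw [Lp.enorm_def, eLpNorm_congr_ae (coeFn_toLp φ 2 μ)]
    simpa [enorm_eq_nnnorm] using
      (eLpNorm_nnreal_pow_eq_lintegral (f := ⇑φ) (μ := μ) (p := 2) two_ne_zero).symm
  simp_rw [h]
  exact (ENNReal.continuous_rpow_const.comp continuous_enorm).comp continuous_toLp

end SchwartzMap

local notation "∂₁" => LineDeriv.lineDerivOp ((1 : ℝ), (0 : ℝ))
local notation "∂₂" => LineDeriv.lineDerivOp ((0 : ℝ), (1 : ℝ))

section Plane

variable {F : Type*} [NormedAddCommGroup F] [InnerProductSpace ℝ F]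

theorem coe_nnnorm_rpow_two_le_lintegral_fst (φ : 𝓢(ℝ × ℝ, F)) (x₁ x₂ : ℝ) :
    (‖φ (x₁, x₂)‖₊ : ℝ≥0∞) ^ (2:ℝ) ≤
      ∫⁻ u, (‖φ (u, x₂)‖₊ : ℝ≥0∞) ^ (2:ℝ) + (‖∂₁ φ (u, x₂)‖₊ : ℝ≥0∞) ^ (2:ℝ) := by
  refine (φ.coe_nnnorm_rpow_two_le_lintegral_line (v := ((1:ℝ), (0:ℝ))) (by simp)
    (x₁, x₂)).trans_eq ?_
  simp only [Prod.smul_mk, smul_eq_mul, mul_one, mul_zero, Prod.mk_add_mk, add_zero]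
  exact lintegral_add_left_eq_self
    (fun u => (‖φ (u, x₂)‖₊ : ℝ≥0∞) ^ (2:ℝ) + (‖∂₁ φ (u, x₂)‖₊ : ℝ≥0∞) ^ (2:ℝ)) x₁

theorem coe_nnnorm_rpow_two_le_lintegral_snd (φ : 𝓢(ℝ × ℝ, F)) (x₁ x₂ : ℝ) :
    (‖φ (x₁, x₂)‖₊ : ℝ≥0∞) ^ (2:ℝ) ≤
      ∫⁻ u, (‖φ (x₁, u)‖₊ : ℝ≥0∞) ^ (2:ℝ) + (‖∂₂ φ (x₁, u)‖₊ : ℝ≥0∞) ^ (2:ℝ) := by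
  refine (φ.coe_nnnorm_rpow_two_le_lintegral_line (v := ((0:ℝ), (1:ℝ))) (by simp)
    (x₁, x₂)).trans_eq ?_
  simp only [Prod.smul_mk, smul_eq_mul, mul_one, mul_zero, Prod.mk_add_mk, add_zero]
  exact lintegral_add_left_eq_self
    (fun u => (‖φ (x₁, u)‖₊ : ℝ≥0∞) ^ (2:ℝ) + (‖∂₂ φ (x₁, u)‖₊ : ℝ≥0∞) ^ (2:ℝ)) x₂

end Plane

theorem H1Norm_rpow_two (φ : 𝓢(ℝ × ℝ, ℂ)) :
    H1Norm φ ^ (2:ℝ) = ∫⁻ x, (‖∂₁ φ x‖₊ : ℝ≥0∞) ^ (2:ℝ) +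
      (‖∂₂ φ x‖₊ : ℝ≥0∞) ^ (2:ℝ) + (‖φ x‖₊ : ℝ≥0∞) ^ (2:ℝ) := by
  rw [H1Norm, ← ENNReal.rpow_mul]
  norm_num
  rfl

theorem H1Norm_rpow_two_rpow_half (h : ℝ × ℝ → ℂ) :
    (H1Norm h ^ (2:ℝ)) ^ ((1:ℝ)/2) = H1Norm h := by
  rw [← ENNReal.rpow_mul]; norm_num

theorem continuous_H1Norm : Continuous fun φ : 𝓢(ℝ × ℝ, ℂ) => H1Norm φ := by
  have h (φ : 𝓢(ℝ × ℝ, ℂ)) : H1Norm φ = ((∫⁻ x, (‖∂₁ φ x‖₊ : ℝ≥0∞) ^ (2:ℝ)) +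
      (∫⁻ x, (‖∂₂ φ x‖₊ : ℝ≥0∞) ^ (2:ℝ)) + ∫⁻ x, (‖φ x‖₊ : ℝ≥0∞) ^ (2:ℝ)) ^ ((1:ℝ)/2) := by
    rw [← H1Norm_rpow_two_rpow_half, H1Norm_rpow_two, lintegral_add_left (by fun_prop),
      lintegral_add_left (by fun_prop)]
  simp_rw [h]
  have hL := SchwartzMap.continuous_lintegral_coe_nnnorm_rpow_two (E := ℝ × ℝ) (F := ℂ)
    (μ := volume)
  exact ENNReal.continuous_rpow_const.comp
    (((hL.comp (continuous_lineDerivOp _)).add (hL.comp (continuous_lineDerivOp _))).add hL)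

theorem lintegral_lintegral_sq_add_sq_lineDeriv_fst_le_H1Norm (φ : 𝓢(ℝ × ℝ, ℂ)) :
    ∫⁻ x₂, ∫⁻ x₁, (‖φ (x₁, x₂)‖₊ : ℝ≥0∞) ^ (2:ℝ) + (‖∂₁ φ (x₁, x₂)‖₊ : ℝ≥0∞) ^ (2:ℝ)
      ≤ H1Norm φ ^ (2:ℝ) :=
  calc _ = ∫⁻ x, (‖φ x‖₊ : ℝ≥0∞) ^ (2:ℝ) + (‖∂₁ φ x‖₊ : ℝ≥0∞) ^ (2:ℝ) := by
        rw [Measure.volume_eq_prod, lintegral_prod_symm]; fun_prop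
    _ ≤ H1Norm φ ^ (2:ℝ) := by
        rw [H1Norm_rpow_two]
        exact lintegral_mono fun x =>
          (add_comm _ _).trans_le (le_self_add.trans_eq (add_right_comm _ _ _).symm)

theorem lintegral_sq_fst_le_H1Norm (φ : 𝓢(ℝ × ℝ, ℂ)) (x₂ : ℝ) :
    ∫⁻ x₁, (‖φ (x₁, x₂)‖₊ : ℝ≥0∞) ^ (2:ℝ) ≤ H1Norm φ ^ (2:ℝ) :=
  calc ∫⁻ x₁, (‖φ (x₁, x₂)‖₊ : ℝ≥0∞) ^ (2:ℝ)
      ≤ ∫⁻ x₁, ∫⁻ u, (‖φ (x₁, u)‖₊ : ℝ≥0∞) ^ (2:ℝ) + (‖∂₂ φ (x₁, u)‖₊ : ℝ≥0∞) ^ (2:ℝ) :=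
        lintegral_mono fun x₁ => coe_nnnorm_rpow_two_le_lintegral_snd φ x₁ x₂
    _ = ∫⁻ x, (‖φ x‖₊ : ℝ≥0∞) ^ (2:ℝ) + (‖∂₂ φ x‖₊ : ℝ≥0∞) ^ (2:ℝ) := by
        rw [Measure.volume_eq_prod, lintegral_prod]; fun_prop
    _ ≤ H1Norm φ ^ (2:ℝ) := by
        rw [H1Norm_rpow_two]
        exact lintegral_mono fun x =>
          (add_comm _ _).trans_le (le_add_self.trans_eq (add_assoc _ _ _).symm)

theorem lintegral_lintegral_mul_rpow_le_H1Norm_mul (φ γ : 𝓢(ℝ × ℝ, ℂ)) :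
    ∫⁻ x₂, (∫⁻ x₁, (‖φ (x₁, x₂) * γ (x₁, x₂)‖₊ : ℝ≥0∞) ^ ((18:ℝ)/13)) ^ ((13:ℝ)/9)
      ≤ H1Norm φ ^ (2:ℝ) * H1Norm γ ^ (2:ℝ) := by
  set B : ℝ → ℝ≥0∞ := fun x₂ =>
    ∫⁻ x₁, (‖γ (x₁, x₂)‖₊ : ℝ≥0∞) ^ (2:ℝ) + (‖∂₁ γ (x₁, x₂)‖₊ : ℝ≥0∞) ^ (2:ℝ)
  calc ∫⁻ x₂, (∫⁻ x₁, (‖φ (x₁, x₂) * γ (x₁, x₂)‖₊ : ℝ≥0∞) ^ ((18:ℝ)/13)) ^ ((13:ℝ)/9)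
      ≤ ∫⁻ x₂, (∫⁻ x₁, (‖φ (x₁, x₂)‖₊ : ℝ≥0∞) ^ (2:ℝ)) * B x₂ := by
        refine lintegral_mono fun x₂ => ?_
        simp only [nnnorm_mul, ENNReal.coe_mul]
        exact lintegral_mul_rpow_le_of_sq_le (by fun_prop) (by fun_prop)
          (fun x₁ => coe_nnnorm_rpow_two_le_lintegral_fst γ x₁ x₂)
          (lintegral_mono fun _ => le_self_add)
    _ ≤ ∫⁻ x₂, H1Norm φ ^ (2:ℝ) * B x₂ := by
        gcongr with x₂; exact lintegral_sq_fst_le_H1Norm φ x₂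
    _ = H1Norm φ ^ (2:ℝ) * ∫⁻ x₂, B x₂ :=
        lintegral_const_mul _ (Measurable.lintegral_prod_left' (f := fun x : ℝ × ℝ =>
          (‖γ x‖₊ : ℝ≥0∞) ^ (2:ℝ) + (‖∂₁ γ x‖₊ : ℝ≥0∞) ^ (2:ℝ)) (by fun_prop))
    _ ≤ H1Norm φ ^ (2:ℝ) * H1Norm γ ^ (2:ℝ) := by
        gcongr; exact lintegral_lintegral_sq_add_sq_lineDeriv_fst_le_H1Norm γ

/-- a space-time product estimate in `L²_T L²_{x₂} L^{18/13}_{x₁}`. -/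
theorem stmt13 :
    ∃ C : ℝ, 0 < C ∧ ∀ T : ℝ, 0 < T →
      ∀ f g : ℝ → SchwartzMap (ℝ × ℝ) ℂ,
        ContinuousOn f (Set.Icc 0 T) → ContinuousOn g (Set.Icc 0 T) →
          (∫⁻ t in Set.Icc (0:ℝ) T, ∫⁻ x₂ : ℝ,
              (∫⁻ x₁ : ℝ,
                  (‖f t (x₁, x₂) * g t (x₁, x₂)‖₊ : ℝ≥0∞) ^ ((18:ℝ)/13)) ^ ((13:ℝ)/9))
              ^ ((1:ℝ)/2)
            ≤ ENNReal.ofReal C *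
                ((∫⁻ t in Set.Icc (0:ℝ) T, (H1Norm ⇑(f t)) ^ (4:ℝ)) ^ ((1:ℝ)/2) +
                 (∫⁻ t in Set.Icc (0:ℝ) T, (H1Norm ⇑(g t)) ^ (4:ℝ)) ^ ((1:ℝ)/2)) := by
  refine ⟨1, one_pos, fun T _ f g hf _ => ?_⟩
  have hmeas : AEMeasurable (fun t => H1Norm (f t) ^ (4:ℝ)) (volume.restrict (Set.Icc 0 T)) :=
    ((ENNReal.continuous_rpow_const.comp continuous_H1Norm).comp_continuousOn hf).aemeasurable
      measurableSet_Icc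
  rw [ENNReal.ofReal_one, one_mul]
  calc _ ≤ (∫⁻ t in Set.Icc (0:ℝ) T, H1Norm (f t) ^ (4:ℝ) + H1Norm (g t) ^ (4:ℝ))
          ^ ((1:ℝ)/2) := by
        gcongr with t
        exact (lintegral_lintegral_mul_rpow_le_H1Norm_mul (f t) (g t)).trans
          (rpow_two_mul_rpow_two_le_rpow_four_add _ _)
    _ ≤ _ := by
        rw [lintegral_add_left' hmeas]
        exact ENNReal.rpow_add_le_add_rpow _ _ (by norm_num) (by norm_num)
end
end

section
/- For every K > 0 there exists a constant C = C(K) > 0 such that: if γ : ℝ² → (0,∞) is a C² function satisfying |∇γ(y)| ≤ K γ(y) for all y and |∂^β γ(y)| ≤ K γ(y) for all y and all multi-indices β with |β| = 2, then for every Schwartz function f on ℝ²: (∫_{ℝ²} f⁴ γ dy)^{1/2} ≤ C ‖f‖_{L²(ℝ²)} (∫_{ℝ²} (|∇f|² + f²) γ dy)^{1/2}. -/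
open MeasureTheory
open scoped ENNReal NNReal

noncomputable section

/-- Partial derivative ∂_{y₁} of a real-valued function on ℝ². -/
def pdr1 (f : ℝ × ℝ → ℝ) : ℝ × ℝ → ℝ := fun y => fderiv ℝ f y (1, 0)

/-- Partial derivative ∂_{y₂} of a real-valued function on ℝ². -/
def pdr2 (f : ℝ × ℝ → ℝ) : ℝ × ℝ → ℝ := fun y => fderiv ℝ f y (0, 1)

/-- A positive `C²` weight `γ` whose first and second logarithmic
derivatives are bounded by `K`. -/
structure IsGoodWeight (K : ℝ) (γ : ℝ × ℝ → ℝ) : Prop where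
  contDiff : ContDiff ℝ 2 γ
  pos : ∀ y, 0 < γ y
  grad_le : ∀ y, Real.sqrt ((pdr1 γ y) ^ 2 + (pdr2 γ y) ^ 2) ≤ K * γ y
  d11_le : ∀ y, |pdr1 (pdr1 γ) y| ≤ K * γ y
  d12_le : ∀ y, |pdr1 (pdr2 γ) y| ≤ K * γ y
  d21_le : ∀ y, |pdr2 (pdr1 γ) y| ≤ K * γ y
  d22_le : ∀ y, |pdr2 (pdr2 γ) y| ≤ K * γ y


/-!
Put `h = f² √γ`, so that `f⁴ γ = h²`. On every horizontal and every vertical line, `h` is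
bounded by the `L¹` norm of its derivative along that line, so
`h(a, b)² ≤ (∫ |∂₂h(a, ·)|) (∫ |∂₁h(·, b)|)`, and Fubini gives `∫ h² ≤ ‖∂₁h‖₁ ‖∂₂h‖₁`.
Since `|∇γ| ≤ K γ`, `|∂ᵢh| ≤ |f| (2 |∂ᵢf| + (K/2) |f|) √γ`, and Cauchy–Schwarz bounds each
`‖∂ᵢh‖₁` by `‖f‖₂ (4 + K²/4)^{1/2} (∫ (|∇f|² + f²) γ)^{1/2}`.
-/

open Set Filter Topology

theorem enorm_le_lintegral_enorm_of_hasDerivAt {g g' : ℝ → ℝ}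
    (hd : ∀ x, HasDerivAt g (g' x) x) (hg : Integrable g) (a : ℝ) :
    ‖g a‖ₑ ≤ ∫⁻ x, ‖g' x‖ₑ := by
  by_cases hg' : Integrable g'
  · have hlim : Tendsto g atBot (𝓝 0) :=
      tendsto_zero_of_hasDerivAt_of_integrableOn_Iic (a := a) (fun x _ => hd x)
        hg'.integrableOn hg.integrableOn
    have hftc : ∫ x in Iic a, g' x = g a := by
      simpa using integral_Iic_of_hasDerivAt_of_tendsto' (fun x _ => hd x) hg'.integrableOn hlim
    calc ‖g a‖ₑ = ENNReal.ofReal ‖∫ x in Iic a, g' x‖ := by rw [hftc, ofReal_norm]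
      _ ≤ ENNReal.ofReal (∫ x, ‖g' x‖) := ENNReal.ofReal_le_ofReal <|
          (norm_integral_le_integral_norm _).trans
            (setIntegral_le_integral hg'.norm (ae_of_all _ fun _ => norm_nonneg _))
      _ = ∫⁻ x, ‖g' x‖ₑ := ofReal_integral_norm_eq_lintegral_enorm hg'
  · have hg'm : AEStronglyMeasurable g' := by
      rw [show g' = deriv g from funext fun x => (hd x).deriv.symm]
      exact (stronglyMeasurable_deriv g).aestronglyMeasurable
    have : ∫⁻ x, ‖g' x‖ₑ = ⊤ := not_lt_top_iff.mp fun h => hg' ⟨hg'm, h⟩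
    simp [this]

section TwoDim

variable {h : ℝ × ℝ → ℝ}

lemma hasDerivAt_pdr1_slice (hd : Differentiable ℝ h) (a b : ℝ) :
    HasDerivAt (fun s => h (s, b)) (pdr1 h (a, b)) a :=
  (hd (a, b)).hasFDerivAt.comp_hasDerivAt a ((hasDerivAt_id a).prodMk (hasDerivAt_const a b))

lemma hasDerivAt_pdr2_slice (hd : Differentiable ℝ h) (a b : ℝ) :
    HasDerivAt (fun s => h (a, s)) (pdr2 h (a, b)) b :=
  (hd (a, b)).hasFDerivAt.comp_hasDerivAt b ((hasDerivAt_const b a).prodMk (hasDerivAt_id b))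

lemma ae_enorm_le_lintegral_pdr1 (hd : Differentiable ℝ h) (hi : Integrable h) :
    ∀ᵐ z : ℝ × ℝ, ‖h z‖ₑ ≤ ∫⁻ t, ‖pdr1 h (t, z.2)‖ₑ := by
  rw [Measure.volume_eq_prod] at hi ⊢
  filter_upwards [Measure.quasiMeasurePreserving_snd.ae hi.prod_left_ae] with z hz
  exact enorm_le_lintegral_enorm_of_hasDerivAt (fun t => hasDerivAt_pdr1_slice hd t z.2) hz z.1

lemma ae_enorm_le_lintegral_pdr2 (hd : Differentiable ℝ h) (hi : Integrable h) :
    ∀ᵐ z : ℝ × ℝ, ‖h z‖ₑ ≤ ∫⁻ u, ‖pdr2 h (z.1, u)‖ₑ := by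
  rw [Measure.volume_eq_prod] at hi ⊢
  filter_upwards [Measure.quasiMeasurePreserving_fst.ae hi.prod_right_ae] with z hz
  exact enorm_le_lintegral_enorm_of_hasDerivAt (fun u => hasDerivAt_pdr2_slice hd z.1 u) hz z.2

theorem lintegral_enorm_sq_le_mul_lintegral_enorm_pdr (hd : Differentiable ℝ h)
    (hi : Integrable h) :
    ∫⁻ z, ‖h z‖ₑ ^ 2 ≤ (∫⁻ z, ‖pdr1 h z‖ₑ) * ∫⁻ z, ‖pdr2 h z‖ₑ := by
  have hm1 : Measurable fun z => ‖pdr1 h z‖ₑ := (measurable_fderiv_apply_const ℝ h _).enorm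
  have hm2 : Measurable fun z => ‖pdr2 h z‖ₑ := (measurable_fderiv_apply_const ℝ h _).enorm
  calc ∫⁻ z, ‖h z‖ₑ ^ 2
      ≤ ∫⁻ z : ℝ × ℝ,
          (∫⁻ u, ‖pdr2 h (z.1, u)‖ₑ) * ∫⁻ t, ‖pdr1 h (t, z.2)‖ₑ := by
        refine lintegral_mono_ae ?_
        filter_upwards [ae_enorm_le_lintegral_pdr1 hd hi, ae_enorm_le_lintegral_pdr2 hd hi]
          with z h1 h2
        rw [sq]
        exact mul_le_mul' h2 h1
    _ = (∫⁻ a, ∫⁻ u, ‖pdr2 h (a, u)‖ₑ) *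
          ∫⁻ b, ∫⁻ t, ‖pdr1 h (t, b)‖ₑ := by
        rw [Measure.volume_eq_prod]
        exact lintegral_prod_mul hm2.lintegral_prod_right'.aemeasurable
          hm1.lintegral_prod_left'.aemeasurable
    _ = (∫⁻ z, ‖pdr1 h z‖ₑ) * ∫⁻ z, ‖pdr2 h z‖ₑ := by
        rw [Measure.volume_eq_prod, lintegral_prod_symm' _ hm1,
          lintegral_prod _ hm2.aemeasurable, mul_comm]

end TwoDim

section SqMulSqrt

variable {E : Type*} [NormedAddCommGroup E] [NormedSpace ℝ E] {f γ : E → ℝ} {p : E}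

lemma fderiv_sq_mul_sqrt_apply (hf : DifferentiableAt ℝ f p) (hγ : DifferentiableAt ℝ γ p)
    (hpos : 0 < γ p) (v : E) :
    fderiv ℝ (fun q => f q ^ 2 * √(γ q)) p v
      = √(γ p) * (2 * f p * fderiv ℝ f p v + f p ^ 2 * (fderiv ℝ γ p v / (2 * γ p))) := by
  have hsqrt := (Real.hasDerivAt_sqrt hpos.ne').comp_hasFDerivAt p hγ.hasFDerivAt
  have H : HasFDerivAt (fun q => f q ^ 2 * √(γ q)) _ p := (hf.hasFDerivAt.pow 2).mul hsqrt
  rw [H.fderiv]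
  simp only [add_apply, smul_apply, smul_eq_mul]
  field_simp
  rw [Real.sq_sqrt hpos.le]
  ring

lemma abs_fderiv_sq_mul_sqrt_apply_le {K : ℝ} (hf : DifferentiableAt ℝ f p)
    (hγ : DifferentiableAt ℝ γ p) (hpos : 0 < γ p) (v : E)
    (hγv : |fderiv ℝ γ p v| ≤ K * γ p) :
    |fderiv ℝ (fun q => f q ^ 2 * √(γ q)) p v|
      ≤ |f p| * ((2 * |fderiv ℝ f p v| + K / 2 * |f p|) * √(γ p)) := by
  have hlog : |fderiv ℝ γ p v / (2 * γ p)| ≤ K / 2 := by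
    have h2γ : 0 < 2 * γ p := by linarith
    rw [abs_div, abs_of_pos h2γ, div_le_iff₀ h2γ]
    linarith
  rw [fderiv_sq_mul_sqrt_apply hf hγ hpos, abs_mul, abs_of_nonneg (Real.sqrt_nonneg _)]
  calc √(γ p) * |2 * f p * fderiv ℝ f p v + f p ^ 2 * (fderiv ℝ γ p v / (2 * γ p))|
      ≤ √(γ p) * (2 * |f p| * |fderiv ℝ f p v| + |f p| ^ 2 * (K / 2)) := by
        gcongr
        refine (abs_add_le _ _).trans (add_le_add (le_of_eq ?_) ?_)
        · simp [abs_mul]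
        · rw [abs_mul, abs_pow]
          gcongr
    _ = _ := by ring

end SqMulSqrt

lemma lintegral_enorm_le_of_abs_le_mul {α : Type*} [MeasurableSpace α] {μ : Measure α}
    {u f w e : α → ℝ} {c : ℝ} (hf : AEMeasurable f μ) (hw : AEMeasurable w μ)
    (hu : ∀ x, |u x| ≤ |f x| * w x) (hc : 0 ≤ c) (he : ∀ x, w x ^ 2 ≤ c * e x) :
    ∫⁻ x, ‖u x‖ₑ ∂μ
      ≤ ENNReal.ofReal √c * eLpNorm f 2 μ * (∫⁻ x, ENNReal.ofReal (e x) ∂μ) ^ (1 / 2 : ℝ) := by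
  have hw2 : ∀ x, ‖w x‖ₑ ^ (2 : ℝ) ≤ ENNReal.ofReal c * ENNReal.ofReal (e x) := fun x => by
    rw [← ENNReal.ofReal_mul hc, Real.enorm_eq_ofReal_abs, ENNReal.rpow_two,
      ← ENNReal.ofReal_pow (abs_nonneg _), sq_abs]
    exact ENNReal.ofReal_le_ofReal (he x)
  calc ∫⁻ x, ‖u x‖ₑ ∂μ
      ≤ ∫⁻ x, (fun x => ‖f x‖ₑ) x * (fun x => ‖w x‖ₑ) x ∂μ := by
        refine lintegral_mono fun x => ?_
        rw [← enorm_mul, Real.enorm_eq_ofReal_abs, Real.enorm_eq_ofReal_abs, abs_mul]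
        exact ENNReal.ofReal_le_ofReal ((hu x).trans (by gcongr; exact le_abs_self _))
    _ ≤ (∫⁻ x, ‖f x‖ₑ ^ (2 : ℝ) ∂μ) ^ (1 / 2 : ℝ) *
          (∫⁻ x, ‖w x‖ₑ ^ (2 : ℝ) ∂μ) ^ (1 / 2 : ℝ) :=
        ENNReal.lintegral_mul_le_Lp_mul_Lq μ .two_two hf.enorm hw.enorm
    _ ≤ eLpNorm f 2 μ * (ENNReal.ofReal c * ∫⁻ x, ENNReal.ofReal (e x) ∂μ) ^ (1 / 2 : ℝ) := by
        rw [← lintegral_const_mul' _ _ ENNReal.ofReal_ne_top]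
        gcongr
        · rw [eLpNorm_eq_lintegral_rpow_enorm_toReal two_ne_zero ENNReal.ofNat_ne_top]
          simp
        · exact hw2 _
    _ = _ := by
        rw [ENNReal.mul_rpow_of_nonneg _ _ (by norm_num),
          ENNReal.ofReal_rpow_of_nonneg hc (by norm_num), ← Real.sqrt_eq_rpow]
        ring

def weightedH1Energy (γ f : ℝ × ℝ → ℝ) : ℝ≥0∞ :=
  ∫⁻ y, ENNReal.ofReal (((pdr1 f y) ^ 2 + (pdr2 f y) ^ 2 + f y ^ 2) * γ y)

namespace IsGoodWeight

variable {K : ℝ} {γ f : ℝ × ℝ → ℝ}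

lemma abs_pdr1_le (hγ : IsGoodWeight K γ) (y : ℝ × ℝ) : |pdr1 γ y| ≤ K * γ y := by
  rw [← Real.sqrt_sq_eq_abs]
  exact (Real.sqrt_le_sqrt (le_add_of_nonneg_right (sq_nonneg _))).trans (hγ.grad_le y)

lemma abs_pdr2_le (hγ : IsGoodWeight K γ) (y : ℝ × ℝ) : |pdr2 γ y| ≤ K * γ y := by
  rw [← Real.sqrt_sq_eq_abs]
  exact (Real.sqrt_le_sqrt (le_add_of_nonneg_left (sq_nonneg _))).trans (hγ.grad_le y)

lemma lintegral_enorm_fderiv_sq_mul_sqrt_le (hγ : IsGoodWeight K γ) (hf : Differentiable ℝ f)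
    (v : ℝ × ℝ) (hγv : ∀ y, |fderiv ℝ γ y v| ≤ K * γ y)
    (hfv : ∀ y, (fderiv ℝ f y v) ^ 2 ≤ (pdr1 f y) ^ 2 + (pdr2 f y) ^ 2) :
    ∫⁻ y, ‖fderiv ℝ (fun q => f q ^ 2 * √(γ q)) y v‖ₑ
      ≤ ENNReal.ofReal √(4 + K ^ 2 / 4) * eLpNorm f 2 volume
          * weightedH1Energy γ f ^ (1 / 2 : ℝ) := by
  have hγd : Differentiable ℝ γ := hγ.contDiff.differentiable (by norm_num)
  refine lintegral_enorm_le_of_abs_le_mul hf.continuous.aemeasurable ?_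
    (fun y => abs_fderiv_sq_mul_sqrt_apply_le (hf y) (hγd y) (hγ.pos y) v (hγv y))
    (by positivity) fun y => ?_
  · exact ((((measurable_fderiv_apply_const ℝ f v).abs.const_mul 2).add
      (hf.continuous.measurable.abs.const_mul _)).mul
        hγ.contDiff.continuous.measurable.sqrt).aemeasurable
  · -- Cauchy–Schwarz in `ℝ²`: `(2a + (K/2)b)² + (2b - (K/2)a)² = (4 + K²/4)(a² + b²)`.
    have hcs : (2 * |fderiv ℝ f y v| + K / 2 * |f y|) ^ 2
        ≤ (4 + K ^ 2 / 4) * ((fderiv ℝ f y v) ^ 2 + f y ^ 2) := by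
      nlinarith [sq_nonneg (2 * |f y| - K / 2 * |fderiv ℝ f y v|), sq_abs (fderiv ℝ f y v),
        sq_abs (f y)]
    rw [mul_pow, Real.sq_sqrt (hγ.pos y).le]
    calc (2 * |fderiv ℝ f y v| + K / 2 * |f y|) ^ 2 * γ y
        ≤ (4 + K ^ 2 / 4) * ((fderiv ℝ f y v) ^ 2 + f y ^ 2) * γ y := by
          gcongr
          exact (hγ.pos y).le
      _ ≤ (4 + K ^ 2 / 4) * (((pdr1 f y) ^ 2 + (pdr2 f y) ^ 2 + f y ^ 2) * γ y) := by
          rw [← mul_assoc]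
          gcongr
          · exact (hγ.pos y).le
          · exact hfv y

lemma integrable_sq_mul_sqrt (hγ : IsGoodWeight K γ) (hf : Differentiable ℝ f)
    (hf2 : MemLp f 2) (hE : weightedH1Energy γ f ≠ ⊤) :
    Integrable fun q => f q ^ 2 * √(γ q) := by
  have hγc : Continuous γ := hγ.contDiff.continuous
  refine ⟨((hf.continuous.pow 2).mul hγc.sqrt).aestronglyMeasurable, ?_⟩
  have hle := lintegral_enorm_le_of_abs_le_mul (μ := volume) (u := fun q => f q ^ 2 * √(γ q))
    (w := fun q => |f q| * √(γ q)) (c := 1)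
    (e := fun y => ((pdr1 f y) ^ 2 + (pdr2 f y) ^ 2 + f y ^ 2) * γ y)
    hf.continuous.aemeasurable (hf.continuous.abs.mul hγc.sqrt).aemeasurable
    (fun y => by rw [abs_mul, abs_of_nonneg (Real.sqrt_nonneg _), abs_pow, sq, mul_assoc])
    zero_le_one (fun y => by
      rw [mul_pow, sq_abs, Real.sq_sqrt (hγ.pos y).le, one_mul]
      exact mul_le_mul_of_nonneg_right (le_add_of_nonneg_left (by positivity)) (hγ.pos y).le)
  exact hle.trans_lt (ENNReal.mul_lt_top (ENNReal.mul_lt_top ENNReal.ofReal_lt_top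
    hf2.eLpNorm_lt_top) (ENNReal.rpow_lt_top_of_nonneg (by norm_num) hE))

theorem weighted_gagliardo_nirenberg (hγ : IsGoodWeight K γ) (hf : Differentiable ℝ f)
    (hf2 : MemLp f 2) :
    (∫⁻ y, ENNReal.ofReal (f y ^ 4 * γ y)) ^ (1 / 2 : ℝ)
      ≤ ENNReal.ofReal √(4 + K ^ 2 / 4) * eLpNorm f 2 volume
          * weightedH1Energy γ f ^ (1 / 2 : ℝ) := by
  by_cases hE : weightedH1Energy γ f = ⊤
  · by_cases hf0 : eLpNorm f 2 volume = 0
    · have hf0' : f =ᵐ[volume] 0 :=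
        (eLpNorm_eq_zero_iff hf.continuous.aestronglyMeasurable two_ne_zero).1 hf0
      have : (fun y => ENNReal.ofReal (f y ^ 4 * γ y)) =ᵐ[volume] 0 :=
        hf0'.mono fun y hy => by simp [hy]
      simp [lintegral_congr_ae this]
    · rw [hE, ENNReal.top_rpow_of_pos (by norm_num), ENNReal.mul_top]
      · exact le_top
      · exact mul_ne_zero (ENNReal.ofReal_pos.2 (by positivity)).ne' hf0
  set X := ENNReal.ofReal √(4 + K ^ 2 / 4) * eLpNorm f 2 volume
    * weightedH1Energy γ f ^ (1 / 2 : ℝ)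
  set h := fun q => f q ^ 2 * √(γ q)
  have hγd : Differentiable ℝ γ := hγ.contDiff.differentiable (by norm_num)
  have hhd : Differentiable ℝ h := (hf.pow 2).mul (hγd.sqrt fun y => (hγ.pos y).ne')
  have hsq : ∀ y, ENNReal.ofReal (f y ^ 4 * γ y) = ‖h y‖ₑ ^ 2 := fun y => by
    rw [Real.enorm_eq_ofReal_abs, ← ENNReal.ofReal_pow (abs_nonneg _), sq_abs, mul_pow,
      Real.sq_sqrt (hγ.pos y).le, ← pow_mul]
  have h1 : ∫⁻ y, ‖pdr1 h y‖ₑ ≤ X :=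
    hγ.lintegral_enorm_fderiv_sq_mul_sqrt_le hf (1, 0) hγ.abs_pdr1_le
      fun y => le_add_of_nonneg_right (sq_nonneg _)
  have h2 : ∫⁻ y, ‖pdr2 h y‖ₑ ≤ X :=
    hγ.lintegral_enorm_fderiv_sq_mul_sqrt_le hf (0, 1) hγ.abs_pdr2_le
      fun y => le_add_of_nonneg_left (sq_nonneg _)
  calc (∫⁻ y, ENNReal.ofReal (f y ^ 4 * γ y)) ^ (1 / 2 : ℝ)
      = (∫⁻ y, ‖h y‖ₑ ^ 2) ^ (1 / 2 : ℝ) := by simp_rw [hsq]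
    _ ≤ ((∫⁻ y, ‖pdr1 h y‖ₑ) * ∫⁻ y, ‖pdr2 h y‖ₑ) ^ (1 / 2 : ℝ) := by
        gcongr
        exact lintegral_enorm_sq_le_mul_lintegral_enorm_pdr hhd
          (integrable_sq_mul_sqrt hγ hf hf2 hE)
    _ ≤ (X * X) ^ (1 / 2 : ℝ) := by gcongr
    _ = X := by
        rw [← sq, ← ENNReal.rpow_natCast, ← ENNReal.rpow_mul]
        norm_num

end IsGoodWeight

theorem stmt15_general (K : ℝ) :
    ∃ C : ℝ, 0 < C ∧ ∀ γ : ℝ × ℝ → ℝ, IsGoodWeight K γ →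
      ∀ f : SchwartzMap (ℝ × ℝ) ℝ,
        (∫⁻ y : ℝ × ℝ, ENNReal.ofReal (f y ^ 4 * γ y)) ^ ((1:ℝ)/2)
          ≤ ENNReal.ofReal C * eLpNorm (⇑f) 2 volume *
              (∫⁻ y : ℝ × ℝ,
                  ENNReal.ofReal
                    (((pdr1 ⇑f y) ^ 2 + (pdr2 ⇑f y) ^ 2 + f y ^ 2) * γ y)) ^ ((1:ℝ)/2) :=
  ⟨√(4 + K ^ 2 / 4), by positivity, fun _ hγ f =>
    hγ.weighted_gagliardo_nirenberg f.differentiable (f.memLp 2)⟩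

/-- weighted 2D Gagliardo–Nirenberg estimate
`(∫ f⁴ γ)^{1/2} ≤ C ‖f‖_{L²} (∫ (|∇f|² + f²) γ)^{1/2}`. -/
theorem stmt15 (K : ℝ) (hK : 0 < K) :
    ∃ C : ℝ, 0 < C ∧ ∀ γ : ℝ × ℝ → ℝ, IsGoodWeight K γ →
      ∀ f : SchwartzMap (ℝ × ℝ) ℝ,
        (∫⁻ y : ℝ × ℝ, ENNReal.ofReal (f y ^ 4 * γ y)) ^ ((1:ℝ)/2)
          ≤ ENNReal.ofReal C * eLpNorm (⇑f) 2 volume *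
              (∫⁻ y : ℝ × ℝ,
                  ENNReal.ofReal
                    (((pdr1 ⇑f y) ^ 2 + (pdr2 ⇑f y) ^ 2 + f y ^ 2) * γ y)) ^ ((1:ℝ)/2) :=
  stmt15_general K
end
end
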